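/- Let φ be an Orlicz function such that ∑_{n=n₁}^∞ φ(1/n) < ∞ for some n₁ ∈ ℕ. Then for x ∈ ces_φ the following are equivalent: x ∈ A_φ, and x is order continuous, i.e. for every sequence (x_m) in ℝ^ℕ with 0 ≤ x_m(i) ≤ |x(i)| for all m, i and x_m(i) → 0 as m → ∞ for every i, one has ‖x_m‖_φ → 0. -/

import Mathlib

open scoped ENNReal
open Filter

/-- An Orlicz function: `φ : ℝ → [0,∞]` even, convex, left continuous on `ℝ₊`,
continuous at zero, with `φ 0 = 0` and `φ u → ∞` as `u → ∞`. -/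
structure OrliczFunction where
  toFun : ℝ → ℝ≥0∞
  even' : ∀ u : ℝ, toFun (-u) = toFun u
  convex' : ∀ u v t : ℝ, 0 ≤ t → t ≤ 1 →
    toFun (t * u + (1 - t) * v) ≤ ENNReal.ofReal t * toFun u + ENNReal.ofReal (1 - t) * toFun v
  map_zero' : toFun 0 = 0
  leftContinuous' : ∀ t : ℝ, 0 < t → Tendsto toFun (nhdsWithin t (Set.Iio t)) (nhds (toFun t))
  continuousAtZero' : Tendsto toFun (nhds 0) (nhds 0)
  tendsto_top' : Tendsto toFun atTop (nhds ⊤)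

/-- The Cesàro mean `σx(n) = (1/n) ∑_{j=1}^n |x j|` (with `0`-based indexing). -/
noncomputable def cesaroMean (x : ℕ → ℝ) (n : ℕ) : ℝ :=
  (∑ j ∈ Finset.range (n + 1), |x j|) / (n + 1)

/-- The modular `ρ_φ(x) = ∑_i φ(σx(i))`. -/
noncomputable def rho (φ : OrliczFunction) (x : ℕ → ℝ) : ℝ≥0∞ :=
  ∑' n : ℕ, φ.toFun (cesaroMean x n)

/-- The Cesàro–Orlicz sequence space `ces_φ`. -/
def cesOrlicz (φ : OrliczFunction) : Set (ℕ → ℝ) :=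
  {x | ∃ lam : ℝ, 0 < lam ∧ rho φ (fun i => lam * x i) < ⊤}

/-- The Luxemburg norm `‖x‖_φ = inf {λ > 0 : ρ_φ(x/λ) ≤ 1}`. -/
noncomputable def luxNorm (φ : OrliczFunction) (x : ℕ → ℝ) : ℝ :=
  sInf {lam : ℝ | 0 < lam ∧ rho φ (fun i => x i / lam) ≤ 1}

/-- The subspace `A_φ` of `ces_φ`. -/
def Aphi (φ : OrliczFunction) : Set (ℕ → ℝ) :=
  {x | x ∈ cesOrlicz φ ∧ ∀ k : ℝ, 0 < k → ∃ nk : ℕ,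
    ∑' n : ℕ, φ.toFun ((k / ((nk + n + 1 : ℕ) : ℝ)) * ∑ i ∈ Finset.range (nk + n + 1), |x i|) < ⊤}

/-- `∃ n₁, ∑_{n=n₁}^∞ φ(1/n) < ∞`. -/
def TailFinite (φ : OrliczFunction) : Prop :=
  ∃ n₁ : ℕ, ∑' n : ℕ, φ.toFun (((n₁ + n + 1 : ℕ) : ℝ)⁻¹) < ⊤

/-- The `Δ₂`-condition at zero. -/
def Delta2Zero (φ : OrliczFunction) : Prop :=
  ∃ K : ℝ, 0 < K ∧ ∃ a : ℝ, 0 < a ∧ 0 < φ.toFun a ∧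
    ∀ u : ℝ, 0 ≤ u → u ≤ a → φ.toFun (2 * u) ≤ ENNReal.ofReal K * φ.toFun u

/-- `φ` takes only finite values. -/
def FiniteValued (φ : OrliczFunction) : Prop := ∀ u : ℝ, φ.toFun u ≠ ⊤

/-! Membership in `A_φ` means that for every `k` the tails `∑_{n ≥ N} φ(k σx(n))` are finite,
hence small for large `N`. If `|x_m| ≤ |x|` and `x_m → 0` pointwise, the first `N` Cesàro means
of `x_m / ε` tend to `0` and the remaining ones are dominated by those of `x / ε`, so
`ρ_φ(x_m / ε) ≤ 1` for large `m`. Conversely, order continuity applied to the truncations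
`|x| 1_{[m, ∞)}` gives `ρ_φ(2k |x| 1_{[m, ∞)}) ≤ 1` for some `m`, and the head `|x| 1_{[0, m)}`
only adds terms `φ(c / n)`, whose tails are finite by `∑ φ(1/n) < ∞` because
`φ(c / n) ≤ φ(1 / ⌊n / d⌋)` for an integer `d ≥ c`. -/

open Finset

namespace OrliczFunction

variable (φ : OrliczFunction)

theorem map_mul_le {s : ℝ} (u : ℝ) (hs₀ : 0 ≤ s) (hs₁ : s ≤ 1) :
    φ.toFun (s * u) ≤ ENNReal.ofReal s * φ.toFun u := by
  simpa [φ.map_zero'] using φ.convex' u 0 s hs₀ hs₁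

theorem monotoneOn : MonotoneOn φ.toFun (Set.Ici 0) := by
  intro u hu v hv huv
  obtain rfl | hv := (Set.mem_Ici.mp hv).eq_or_lt
  · rw [le_antisymm huv hu]
  have hs₁ : u / v ≤ 1 := (div_le_one hv).2 huv
  calc φ.toFun u = φ.toFun (u / v * v) := by rw [div_mul_cancel₀ _ hv.ne']
    _ ≤ ENNReal.ofReal (u / v) * φ.toFun v := φ.map_mul_le v (div_nonneg hu hv.le) hs₁
    _ ≤ φ.toFun v := mul_le_of_le_one_left' (ENNReal.ofReal_le_one.2 hs₁)

theorem map_add_le (a b : ℝ) : φ.toFun (a + b) ≤ φ.toFun (2 * a) + φ.toFun (2 * b) := by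
  have h := φ.convex' (2 * a) (2 * b) (1 / 2) (by norm_num) (by norm_num)
  rw [show 1 / 2 * (2 * a) + (1 - 1 / 2) * (2 * b) = a + b by ring] at h
  exact h.trans (add_le_add (mul_le_of_le_one_left' (ENNReal.ofReal_le_one.2 (by norm_num)))
    (mul_le_of_le_one_left' (ENNReal.ofReal_le_one.2 (by norm_num))))

end OrliczFunction

theorem cesaroMean_nonneg (x : ℕ → ℝ) (n : ℕ) : 0 ≤ cesaroMean x n := by
  unfold cesaroMean; positivity

theorem cesaroMean_mono {x y : ℕ → ℝ} (h : ∀ i, |x i| ≤ |y i|) (n : ℕ) :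
    cesaroMean x n ≤ cesaroMean y n := by
  unfold cesaroMean
  gcongr ?_ / _
  exact sum_le_sum fun i _ => h i

theorem cesaroMean_const_mul (s : ℝ) (x : ℕ → ℝ) (n : ℕ) :
    cesaroMean (fun i => s * x i) n = |s| * cesaroMean x n := by
  simp only [cesaroMean, abs_mul, ← mul_sum, mul_div_assoc]

theorem tendsto_cesaroMean_zero {xs : ℕ → ℕ → ℝ}
    (h : ∀ i, Tendsto (fun m => xs m i) atTop (nhds 0)) (n : ℕ) :
    Tendsto (fun m => cesaroMean (xs m) n) atTop (nhds 0) := by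
  simpa [cesaroMean] using
    (tendsto_finsetSum (range (n + 1)) fun i _ => (h i).abs).div_const ((n : ℝ) + 1)

section Modular

variable (φ : OrliczFunction)

theorem rho_mono {x y : ℕ → ℝ} (h : ∀ i, |x i| ≤ |y i|) : rho φ x ≤ rho φ y :=
  ENNReal.tsum_le_tsum fun n =>
    φ.monotoneOn (cesaroMean_nonneg x n) (cesaroMean_nonneg y n) (cesaroMean_mono h n)

theorem rho_const_mul_le {s : ℝ} (x : ℕ → ℝ) (hs₀ : 0 ≤ s) (hs₁ : s ≤ 1) :
    rho φ (fun i => s * x i) ≤ ENNReal.ofReal s * rho φ x := by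
  rw [rho, rho, ← ENNReal.tsum_mul_left]
  refine ENNReal.tsum_le_tsum fun n => ?_
  rw [cesaroMean_const_mul, abs_of_nonneg hs₀]
  exact φ.map_mul_le _ hs₀ hs₁

theorem cesOrlicz_of_abs_le {x y : ℕ → ℝ} (hx : x ∈ cesOrlicz φ)
    (h : ∀ i, |y i| ≤ |x i|) :
    y ∈ cesOrlicz φ := by
  obtain ⟨c, hc, hfin⟩ := hx
  refine ⟨c, hc, (rho_mono φ fun i => ?_).trans_lt hfin⟩
  rw [abs_mul, abs_mul]
  exact mul_le_mul_of_nonneg_left (h i) (abs_nonneg c)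

theorem exists_rho_div_le_one {x : ℕ → ℝ} (hx : x ∈ cesOrlicz φ) :
    ∃ lam : ℝ, 0 < lam ∧ rho φ (fun i => x i / lam) ≤ 1 := by
  obtain ⟨c, hc, hfin⟩ := hx
  set R := rho φ (fun i => c * x i)
  set t : ℝ := max 1 R.toReal
  have ht : 1 ≤ t := le_max_left _ _
  have ht₀ : 0 < t := one_pos.trans_le ht
  refine ⟨t / c, div_pos ht₀ hc, ?_⟩
  have hR : R ≤ ENNReal.ofReal t := by
    rw [← ENNReal.ofReal_toReal hfin.ne]
    exact ENNReal.ofReal_le_ofReal (le_max_right _ _)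
  calc rho φ (fun i => x i / (t / c)) = rho φ (fun i => t⁻¹ * (c * x i)) := by
        congr 1; funext i; field_simp
    _ ≤ ENNReal.ofReal t⁻¹ * R :=
        rho_const_mul_le φ _ (inv_nonneg.2 ht₀.le) (inv_le_one_of_one_le₀ ht)
    _ ≤ ENNReal.ofReal t⁻¹ * ENNReal.ofReal t := by gcongr
    _ = 1 := by rw [← ENNReal.ofReal_mul (inv_nonneg.2 ht₀.le), inv_mul_cancel₀ ht₀.ne',
                  ENNReal.ofReal_one]

theorem luxNorm_nonneg (x : ℕ → ℝ) : 0 ≤ luxNorm φ x :=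
  Real.sInf_nonneg fun _ h => h.1.le

theorem luxNorm_le {x : ℕ → ℝ} {lam : ℝ} (hlam : 0 < lam)
    (h : rho φ (fun i => x i / lam) ≤ 1) :
    luxNorm φ x ≤ lam :=
  csInf_le ⟨0, fun _ h => h.1.le⟩ ⟨hlam, h⟩

theorem rho_div_le_one_of_luxNorm_lt {x : ℕ → ℝ} (hx : x ∈ cesOrlicz φ) {lam : ℝ}
    (h : luxNorm φ x < lam) : rho φ (fun i => x i / lam) ≤ 1 := by
  obtain ⟨μ, ⟨hμ, hρ⟩, hμlam⟩ := exists_lt_of_csInf_lt (exists_rho_div_le_one φ hx) h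
  refine (rho_mono φ fun i => ?_).trans hρ
  rw [abs_div, abs_div, abs_of_pos hμ, abs_of_pos (hμ.trans hμlam)]
  exact div_le_div_of_nonneg_left (abs_nonneg _) hμ hμlam.le

end Modular

theorem ENNReal.tsum_comp_div_nat {d : ℕ} (hd : 0 < d) (g : ℕ → ℝ≥0∞) :
    ∑' n : ℕ, g (n / d) = d * ∑' q : ℕ, g q := by
  have : NeZero d := ⟨hd.ne'⟩
  calc ∑' n : ℕ, g (n / d) = ∑' p : ℕ × Fin d, g p.1 := by
        rw [← (Nat.divModEquiv d).tsum_eq (fun p : ℕ × Fin d => g p.1)]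
        simp [Nat.divModEquiv]
    _ = ∑' (q : ℕ) (_ : Fin d), g q := ENNReal.tsum_prod (f := fun q (_ : Fin d) => g q)
    _ = d * ∑' q, g q := by simp [ENNReal.tsum_mul_left]

theorem TailFinite.exists_tsum_lt_top {φ : OrliczFunction} (htail : TailFinite φ) {c : ℝ}
    (hc : 0 ≤ c) : ∃ N : ℕ, ∑' n : ℕ, φ.toFun (c / ((N + n + 1 : ℕ) : ℝ)) < ⊤ := by
  obtain ⟨n₁, h₁⟩ := htail
  set d : ℕ := ⌈c⌉₊ + 1
  have hd : 0 < d := Nat.succ_pos _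
  have hcd : c ≤ d := (Nat.le_ceil c).trans (by simp [d])
  refine ⟨d * n₁ + ⌈c⌉₊, ?_⟩
  -- `d n₁ + ⌈c⌉₊ + n + 1 = d (n₁ + 1) + n`, and `c / (d (n₁ + 1) + n) ≤ 1 / (n₁ + 1 + ⌊n / d⌋)`
  have key (n : ℕ) : φ.toFun (c / ((d * n₁ + ⌈c⌉₊ + n + 1 : ℕ) : ℝ))
      ≤ φ.toFun (((n₁ + n / d + 1 : ℕ) : ℝ)⁻¹) := by
    refine φ.monotoneOn (Set.mem_Ici.2 (by positivity)) (Set.mem_Ici.2 (by positivity)) ?_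
    rw [← one_div, div_le_div_iff₀ (by positivity) (by positivity)]
    have hdiv : ((n / d : ℕ) : ℝ) * d ≤ n := by exact_mod_cast Nat.div_mul_le_self n d
    have hd' : (d : ℝ) = ⌈c⌉₊ + 1 := by simp [d]
    have h₁ := mul_le_mul_of_nonneg_right hcd (by positivity : (0 : ℝ) ≤ n₁ + 1)
    have h₂ := mul_le_mul_of_nonneg_right hcd (Nat.cast_nonneg (α := ℝ) (n / d))
    push_cast
    nlinarith
  calc ∑' n : ℕ, φ.toFun (c / ((d * n₁ + ⌈c⌉₊ + n + 1 : ℕ) : ℝ))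
      ≤ ∑' n : ℕ, φ.toFun (((n₁ + n / d + 1 : ℕ) : ℝ)⁻¹) := ENNReal.tsum_le_tsum key
    _ = d * ∑' q : ℕ, φ.toFun (((n₁ + q + 1 : ℕ) : ℝ)⁻¹) :=
        ENNReal.tsum_comp_div_nat hd fun q => φ.toFun (((n₁ + q + 1 : ℕ) : ℝ)⁻¹)
    _ < ⊤ := ENNReal.mul_lt_top (by simp) h₁

theorem mem_Aphi_iff (φ : OrliczFunction) (x : ℕ → ℝ) :
    x ∈ Aphi φ ↔ x ∈ cesOrlicz φ ∧ ∀ k : ℝ, 0 < k → ∃ N : ℕ,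
      ∑' n : ℕ, φ.toFun (cesaroMean (fun i => k * x i) (N + n)) < ⊤ := by
  have h (k : ℝ) (hk : 0 < k) (n : ℕ) :
      k / ((n + 1 : ℕ) : ℝ) * ∑ i ∈ range (n + 1), |x i|
      = cesaroMean (fun i => k * x i) n := by
    rw [cesaroMean_const_mul, abs_of_pos hk, cesaroMean]
    push_cast
    ring
  exact and_congr_right fun _ =>
    forall₂_congr fun k hk => exists_congr fun N => by simp only [h k hk]

noncomputable def absFrom (x : ℕ → ℝ) (m : ℕ) : ℕ → ℝ :=
  fun i => if i < m then 0 else |x i|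

section AbsFrom

variable (x : ℕ → ℝ)

theorem absFrom_nonneg (m i : ℕ) : 0 ≤ absFrom x m i := by
  unfold absFrom; split_ifs <;> simp

theorem absFrom_le (m i : ℕ) : absFrom x m i ≤ |x i| := by
  unfold absFrom; split_ifs <;> simp

theorem tendsto_absFrom (i : ℕ) : Tendsto (fun m => absFrom x m i) atTop (nhds 0) :=
  tendsto_atTop_of_eventually_const (i₀ := i + 1) fun m hm => if_pos (by omega)

theorem cesaroMean_le_add_absFrom (m n : ℕ) :
    cesaroMean x n
      ≤ (∑ i ∈ range m, |x i|) / ((n + 1 : ℕ) : ℝ) + cesaroMean (absFrom x m) n := by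
  have hhead :
      ∑ i ∈ range (n + 1), (if i < m then |x i| else 0) ≤ ∑ i ∈ range m, |x i| := by
    rw [← sum_filter]
    exact sum_le_sum_of_subset_of_nonneg (fun i hi => mem_range.2 (mem_filter.1 hi).2)
      fun i _ _ => abs_nonneg _
  have hsplit : ∑ i ∈ range (n + 1), |x i|
      = ∑ i ∈ range (n + 1), (if i < m then |x i| else 0)
        + ∑ i ∈ range (n + 1), |absFrom x m i| := by
    rw [← sum_add_distrib]
    refine sum_congr rfl fun i _ => ?_
    unfold absFrom; split_ifs <;> simp
  rw [cesaroMean, cesaroMean, hsplit]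
  push_cast
  rw [add_div]
  gcongr

theorem OrliczFunction.map_cesaroMean_le (φ : OrliczFunction) {k : ℝ} (hk : 0 ≤ k)
    (m n : ℕ) :
    φ.toFun (cesaroMean (fun i => k * x i) n)
      ≤ φ.toFun (2 * k * (∑ i ∈ range m, |x i|) / ((n + 1 : ℕ) : ℝ))
        + φ.toFun (cesaroMean (fun i => 2 * k * absFrom x m i) n) := by
  have hbound : cesaroMean (fun i => k * x i) n
      ≤ k * ((∑ i ∈ range m, |x i|) / ((n + 1 : ℕ) : ℝ))
        + k * cesaroMean (absFrom x m) n := by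
    rw [cesaroMean_const_mul, abs_of_nonneg hk, ← mul_add]
    exact mul_le_mul_of_nonneg_left (cesaroMean_le_add_absFrom x m n) hk
  refine (φ.monotoneOn (cesaroMean_nonneg _ _) ?_ hbound).trans ((φ.map_add_le _ _).trans_eq ?_)
  · exact add_nonneg (by positivity) (mul_nonneg hk (cesaroMean_nonneg _ _))
  · rw [cesaroMean_const_mul, abs_of_nonneg (by positivity : (0 : ℝ) ≤ 2 * k)]
    ring_nf

end AbsFrom

section OrderContinuity

variable (φ : OrliczFunction)

theorem tendsto_luxNorm_of_mem_Aphi {x : ℕ → ℝ} (hA : x ∈ Aphi φ) {xs : ℕ → ℕ → ℝ}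
    (hle : ∀ m i, |xs m i| ≤ |x i|) (hlim : ∀ i, Tendsto (fun m => xs m i) atTop (nhds 0)) :
    Tendsto (fun m => luxNorm φ (xs m)) atTop (nhds 0) := by
  refine tendsto_order.2 ⟨fun a ha => .of_forall fun m => ha.trans_le (luxNorm_nonneg φ _),
    fun ε hε => ?_⟩
  set k := (ε / 2)⁻¹
  obtain ⟨N, hN⟩ :
      ∃ N, ∑' n, φ.toFun (cesaroMean (fun i => k * x i) (n + N)) ≤ 1 / 2 := by
    obtain ⟨N₀, hN₀⟩ := ((mem_Aphi_iff φ x).1 hA).2 k (by positivity)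
    obtain ⟨J, hJ⟩ := ((ENNReal.tendsto_sum_nat_add _ hN₀.ne).eventually_lt_const
      (by norm_num : (0 : ℝ≥0∞) < 1 / 2)).exists
    exact ⟨N₀ + J, by simpa only [add_comm, add_left_comm] using hJ.le⟩
  have hhead : Tendsto (fun m => ∑ n ∈ range N, φ.toFun (cesaroMean (fun i => k * xs m i) n))
      atTop (nhds 0) := by
    simpa using tendsto_finsetSum (range N) fun n _ => φ.continuousAtZero'.comp
      (tendsto_cesaroMean_zero (fun i => by simpa using (hlim i).const_mul k) n)
  filter_upwards [hhead.eventually_lt_const (by norm_num : (0 : ℝ≥0∞) < 1 / 2)] with m hm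
  refine (luxNorm_le φ (lam := ε / 2) (by positivity) ?_).trans_lt (by linarith)
  have htail : ∑' n, φ.toFun (cesaroMean (fun i => k * xs m i) (n + N)) ≤ 1 / 2 := by
    refine (ENNReal.tsum_le_tsum fun n => φ.monotoneOn (cesaroMean_nonneg _ _)
      (cesaroMean_nonneg _ _) (cesaroMean_mono (fun i => ?_) _)).trans hN
    rw [abs_mul, abs_mul]
    exact mul_le_mul_of_nonneg_left (hle m i) (abs_nonneg k)
  rw [show (fun i => xs m i / (ε / 2)) = fun i => k * xs m i from
    funext fun i => div_eq_inv_mul _ _, rho,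
    ← Summable.sum_add_tsum_nat_add' ENNReal.summable (k := N)]
  calc _ ≤ (1 / 2 : ℝ≥0∞) + 1 / 2 := add_le_add hm.le htail
    _ = 1 := ENNReal.add_halves 1

theorem mem_Aphi_of_tendsto_luxNorm (htail : TailFinite φ) {x : ℕ → ℝ}
    (hx : x ∈ cesOrlicz φ)
    (hOC : Tendsto (fun m => luxNorm φ (absFrom x m)) atTop (nhds 0)) : x ∈ Aphi φ := by
  refine (mem_Aphi_iff φ x).2 ⟨hx, fun k hk => ?_⟩
  obtain ⟨m, hm⟩ := (hOC.eventually_lt_const (by positivity : 0 < (2 * k)⁻¹)).exists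
  have hρ : rho φ (fun i => 2 * k * absFrom x m i) ≤ 1 := by
    have hx' : absFrom x m ∈ cesOrlicz φ := cesOrlicz_of_abs_le φ hx fun i => by
      rw [abs_of_nonneg (absFrom_nonneg x m i)]; exact absFrom_le x m i
    simpa [div_eq_inv_mul] using rho_div_le_one_of_luxNorm_lt φ hx' hm
  obtain ⟨N, hN⟩ :=
    htail.exists_tsum_lt_top (c := 2 * k * ∑ i ∈ range m, |x i|) (by positivity)
  refine ⟨N, lt_of_le_of_lt ?_ (ENNReal.add_lt_top.2 ⟨hN, hρ.trans_lt ENNReal.one_lt_top⟩)⟩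
  calc ∑' n, φ.toFun (cesaroMean (fun i => k * x i) (N + n))
      ≤ ∑' n, (φ.toFun (2 * k * (∑ i ∈ range m, |x i|) / ((N + n + 1 : ℕ) : ℝ))
          + φ.toFun (cesaroMean (fun i => 2 * k * absFrom x m i) (N + n))) :=
        ENNReal.tsum_le_tsum fun n => φ.map_cesaroMean_le x hk.le m (N + n)
    _ = _ := ENNReal.tsum_add
    _ ≤ _ := add_le_add_right (ENNReal.tsum_comp_le_tsum_of_injective (add_right_injective N)
          fun n => φ.toFun (cesaroMean (fun i => 2 * k * absFrom x m i) n)) _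

end OrderContinuity

/-- for `x ∈ ces_φ`, `x ∈ A_φ` iff `x` is order continuous. -/
theorem stmt_7 (φ : OrliczFunction) (htail : TailFinite φ)
    (x : ℕ → ℝ) (hx : x ∈ cesOrlicz φ) :
    x ∈ Aphi φ ↔
      ∀ xs : ℕ → ℕ → ℝ, (∀ m i, 0 ≤ xs m i) → (∀ m i, xs m i ≤ |x i|) →
        (∀ i, Tendsto (fun m => xs m i) atTop (nhds 0)) →
        Tendsto (fun m => luxNorm φ (xs m)) atTop (nhds 0) := by
  refine ⟨fun hA xs h0 hle hlim => ?_, fun hOC => ?_⟩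
  · exact tendsto_luxNorm_of_mem_Aphi φ hA
      (fun m i => (abs_of_nonneg (h0 m i)).trans_le (hle m i)) hlim
  · exact mem_Aphi_of_tendsto_luxNorm φ htail hx
      (hOC _ (absFrom_nonneg x) (absFrom_le x) (tendsto_absFrom x))
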